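/- arXiv:2105.01741 — 5 statements merged into one kernel-verified Lean document; each statement's English description precedes it below -/
import Mathlib

section
/- Given h_l > 0, v_l ∈ ℝ, g > 0, the function φ_l(h) defined piecewise as v_l − 2(sqrt(g h) − sqrt(g h_l)) for 0 < h ≤ h_l and v_l − (h − h_l) sqrt(g (h + h_l)/(2 h h_l)) for h > h_l is continuous and strictly decreasing on (0, ∞). -/
private lemma shock_key (g hl : ℝ) (hg : 0 < g) (hhl : 0 < hl) {a b : ℝ}
    (ha : hl ≤ a) (hab : a < b) :
    (a - hl) * Real.sqrt (g * (a + hl) / (2 * a * hl)) <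
      (b - hl) * Real.sqrt (g * (b + hl) / (2 * b * hl)) := by
  have ha0 : 0 < a := lt_of_lt_of_le hhl ha
  have hb0 : 0 < b := ha0.trans hab
  have hrw : ∀ x : ℝ, 0 < x → hl ≤ x →
      (x - hl) * Real.sqrt (g * (x + hl) / (2 * x * hl)) =
        Real.sqrt ((x - hl) ^ 2 * (g * (x + hl) / (2 * x * hl))) := by
    intro x hx0 hxl
    rw [Real.sqrt_mul (sq_nonneg _), Real.sqrt_sq (by linarith)]
  rw [hrw a ha0 ha, hrw b hb0 (ha.trans hab.le)]
  apply Real.sqrt_lt_sqrt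
  · positivity
  · rw [mul_div_assoc', mul_div_assoc', div_lt_div_iff₀ (by positivity) (by positivity)]
    have hP : hl ^ 3 < a * b * (a + b - hl) := by
      have h1 : hl ^ 2 < a * b := by nlinarith
      have h2 : hl < a + b - hl := by linarith
      nlinarith [mul_lt_mul' h1.le h2 hhl.le (lt_of_le_of_lt (sq_nonneg hl) h1)]
    nlinarith [mul_pos (mul_pos hg hhl) (mul_pos (sub_pos.2 hab) (sub_pos.2 hP))]

/-- The 1-wave curve `φ_l` of the shallow water Riemann problem is continuous and
strictly decreasing on `(0, ∞)`. -/
theorem phi_l_continuous_strictAnti (g hl vl : ℝ) (hg : 0 < g) (hhl : 0 < hl) :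
    ContinuousOn
        (fun h : ℝ => if h ≤ hl then vl - 2 * (Real.sqrt (g * h) - Real.sqrt (g * hl))
          else vl - (h - hl) * Real.sqrt (g * (h + hl) / (2 * h * hl)))
        (Set.Ioi 0) ∧
    StrictAntiOn
        (fun h : ℝ => if h ≤ hl then vl - 2 * (Real.sqrt (g * h) - Real.sqrt (g * hl))
          else vl - (h - hl) * Real.sqrt (g * (h + hl) / (2 * h * hl)))
        (Set.Ioi 0) := by
  constructor
  · apply ContinuousOn.if
    · intro a ha
      have hfr : frontier {a : ℝ | a ≤ hl} = {hl} := frontier_Iic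
      rw [hfr] at ha
      have : a = hl := ha.2
      subst this
      simp
    · exact (by fun_prop : Continuous fun h : ℝ =>
        vl - 2 * (Real.sqrt (g * h) - Real.sqrt (g * hl))).continuousOn
    · have hcl : closure {a : ℝ | ¬ a ≤ hl} = Set.Ici hl := by
        have : {a : ℝ | ¬ a ≤ hl} = Set.Ioi hl := by ext x; simp
        rw [this, closure_Ioi]
      rw [hcl]
      apply ContinuousOn.sub continuousOn_const
      apply ContinuousOn.mul (by fun_prop)
      apply ContinuousOn.sqrt
      apply ContinuousOn.div (by fun_prop) (by fun_prop)
      intro x hx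
      have hx0 : 0 < x := lt_of_lt_of_le (lt_of_lt_of_le hhl (le_refl hl)) hx.2
      positivity
  · intro a ha b hb hab
    simp only [Set.mem_Ioi] at ha hb
    by_cases hbhl : b ≤ hl
    · have hahl : a ≤ hl := hab.le.trans hbhl
      simp only [if_pos hahl, if_pos hbhl]
      have : Real.sqrt (g * a) < Real.sqrt (g * b) :=
        Real.sqrt_lt_sqrt (by positivity) (by nlinarith)
      linarith
    · push_neg at hbhl
      by_cases hahl : a ≤ hl
      · simp only [if_pos hahl, if_neg (not_le.2 hbhl)]
        have h1 : Real.sqrt (g * a) ≤ Real.sqrt (g * hl) :=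
          Real.sqrt_le_sqrt (by nlinarith)
        have h2 : 0 < (b - hl) * Real.sqrt (g * (b + hl) / (2 * b * hl)) := by
          apply mul_pos (by linarith)
          apply Real.sqrt_pos.2
          positivity
        linarith
      · push_neg at hahl
        simp only [if_neg (not_le.2 hahl), if_neg (not_le.2 hbhl)]
        have := shock_key g hl hg hhl hahl.le hab
        linarith
end

section
/- Given h_r > 0, v_r ∈ ℝ, g > 0, the function φ_r(h) defined piecewise as v_r + 2(sqrt(g h) − sqrt(g h_r)) for 0 < h ≤ h_r and v_r + (h − h_r) sqrt(g (h + h_r)/(2 h h_r)) for h > h_r is continuous and strictly increasing on (0, ∞). -/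
open Real Set Filter

/-- The 2-wave curve `φ_r` of the shallow water Riemann problem is continuous and
strictly increasing on `(0, ∞)`. -/
theorem phi_r_continuous_strictMono (g hr vr : ℝ) (hg : 0 < g) (hhr : 0 < hr) :
    ContinuousOn
        (fun h : ℝ => if h ≤ hr then vr + 2 * (Real.sqrt (g * h) - Real.sqrt (g * hr))
          else vr + (h - hr) * Real.sqrt (g * (h + hr) / (2 * h * hr)))
        (Set.Ioi 0) ∧
    StrictMonoOn
        (fun h : ℝ => if h ≤ hr then vr + 2 * (Real.sqrt (g * h) - Real.sqrt (g * hr))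
          else vr + (h - hr) * Real.sqrt (g * (h + hr) / (2 * h * hr)))
        (Set.Ioi 0) := by
  set f1 : ℝ → ℝ := fun h => vr + 2 * (Real.sqrt (g * h) - Real.sqrt (g * hr)) with hf1
  set f2 : ℝ → ℝ := fun h => vr + (h - hr) * Real.sqrt (g * (h + hr) / (2 * h * hr)) with hf2
  set f : ℝ → ℝ := fun h => if h ≤ hr then f1 h else f2 h with hf
  have hc1 : Continuous f1 := by
    apply Continuous.add continuous_const
    exact (continuous_const.mul ((Real.continuous_sqrt.comp
      (continuous_const.mul continuous_id)).sub continuous_const))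
  have hc2 : ∀ x : ℝ, x ≠ 0 → ContinuousAt f2 x := by
    intro x hx
    have hd : ContinuousAt (fun h : ℝ => g * (h + hr) / (2 * h * hr)) x := by
      apply ContinuousAt.div
      · fun_prop
      · fun_prop
      · intro h
        apply hx
        have := mul_ne_zero (mul_ne_zero (two_ne_zero (α := ℝ)) hx) hhr.ne'
        exact absurd h this
    exact ContinuousAt.add continuousAt_const
      (ContinuousAt.mul (by fun_prop) (Real.continuous_sqrt.continuousAt.comp hd))
  have hf2hr : f2 hr = vr := by simp [hf2]
  have hf1hr : f1 hr = vr := by simp [hf1]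
  constructor
  · intro x hx
    rcases lt_trichotomy x hr with hlt | heq | hgt
    · have heq : f =ᶠ[nhds x] f1 := by
        filter_upwards [Iio_mem_nhds hlt] with y hy
        show (if y ≤ hr then f1 y else f2 y) = f1 y
        rw [if_pos (mem_Iio.mp hy).le]
      exact (ContinuousAt.congr hc1.continuousAt heq.symm).continuousWithinAt
    · subst heq
      have hsub : Ioi (0:ℝ) ⊆ Iic x ∪ Ioi x := fun y _ => le_or_gt y x
      apply ContinuousWithinAt.mono _ hsub
      apply ContinuousWithinAt.union
      · apply ContinuousWithinAt.congr hc1.continuousWithinAt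
        · intro y hy
          show (if y ≤ x then f1 y else f2 y) = f1 y
          rw [if_pos (mem_Iic.mp hy)]
        · show (if x ≤ x then f1 x else f2 x) = f1 x
          rw [if_pos le_rfl]
      · apply ContinuousWithinAt.congr ((hc2 x hhr.ne').continuousWithinAt)
        · intro y hy
          show (if y ≤ x then f1 y else f2 y) = f2 y
          rw [if_neg (not_le.mpr (mem_Ioi.mp hy))]
        · show (if x ≤ x then f1 x else f2 x) = f2 x
          rw [if_pos le_rfl, hf1hr, hf2hr]
    · have heq : f =ᶠ[nhds x] f2 := by
        filter_upwards [Ioi_mem_nhds hgt] with y hy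
        show (if y ≤ hr then f1 y else f2 y) = f2 y
        rw [if_neg (not_le.mpr (mem_Ioi.mp hy))]
      exact (ContinuousAt.congr (hc2 x (hhr.trans hgt).ne') heq.symm).continuousWithinAt
  · intro a ha b hb hab
    simp only [mem_Ioi] at ha hb
    have key2 : ∀ y : ℝ, hr < y → f2 y = vr + Real.sqrt ((y - hr)^2 * (g * (y + hr) / (2 * y * hr))) := by
      intro y hy
      rw [Real.sqrt_mul (sq_nonneg _), Real.sqrt_sq (by linarith)]
    have hpos2 : ∀ y : ℝ, hr < y → vr < f2 y := by
      intro y hy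
      have hy0 : 0 < y := hhr.trans hy
      have harg : 0 < g * (y + hr) / (2 * y * hr) := by positivity
      have := Real.sqrt_pos.mpr harg
      have : 0 < (y - hr) * Real.sqrt (g * (y + hr) / (2 * y * hr)) :=
        mul_pos (by linarith) this
      simp only [hf2]; linarith
    rcases le_or_gt b hr with hble | hbgt
    · have hale : a ≤ hr := hab.le.trans hble
      simp only [hf, hale, hble, if_pos, hf1]
      have : Real.sqrt (g * a) < Real.sqrt (g * b) :=
        Real.sqrt_lt_sqrt (by positivity) (by nlinarith)
      linarith
    · rcases le_or_gt a hr with hale | hagt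
      · have h1 : f a ≤ vr := by
          simp only [hf, hale, if_pos, hf1]
          have : Real.sqrt (g * a) ≤ Real.sqrt (g * hr) :=
            Real.sqrt_le_sqrt (by nlinarith)
          linarith
        have h2 : vr < f b := by
          simp only [hf, not_le.mpr hbgt, if_neg, not_false_iff]
          exact hpos2 b hbgt
        linarith
      · have ha0 : 0 < a := hhr.trans hagt
        have hb0 : 0 < b := hhr.trans hbgt
        simp only [hf, not_le.mpr hagt, not_le.mpr hbgt, if_neg, not_false_iff]
        have ea := key2 a hagt
        have eb := key2 b hbgt
        simp only [hf2] at ea eb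
        rw [show vr + (a - hr) * Real.sqrt (g * (a + hr) / (2 * a * hr)) = f2 a from rfl] at *
        rw [show vr + (b - hr) * Real.sqrt (g * (b + hr) / (2 * b * hr)) = f2 b from rfl] at *
        rw [ea, eb]
        have hlt : (a - hr)^2 * (g * (a + hr) / (2 * a * hr)) < (b - hr)^2 * (g * (b + hr) / (2 * b * hr)) := by
          have hab' : hr ^ 2 < a * b := by nlinarith
          have hsum : hr < a + b - hr := by linarith
          have h1 : hr ^ 3 < a * b * (a + b - hr) := by
            nlinarith [mul_pos (sub_pos.mpr hab') hhr,
              mul_pos (mul_pos ha0 hb0) (sub_pos.mpr hsum)]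
          have hk : b * ((a - hr) ^ 2 * (a + hr)) < a * ((b - hr) ^ 2 * (b + hr)) := by
            nlinarith [mul_pos (sub_pos.mpr hab) (sub_pos.mpr h1)]
          have hk2 := mul_lt_mul_of_pos_left hk (show (0:ℝ) < 2 * g * hr by positivity)
          rw [mul_div_assoc', mul_div_assoc', div_lt_div_iff₀ (by positivity) (by positivity)]
          nlinarith [hk2]
        have := Real.sqrt_lt_sqrt (by positivity) hlt
        linarith
end

section
/- If v_l + 2 sqrt(g h_l) > v_r − 2 sqrt(g h_r) (with h_l, h_r > 0, g > 0), then there exists a unique ĥ > 0 with φ_l(ĥ; h_l, v_l) = φ_r(ĥ; h_r, v_r), where φ_l and φ_r are the (strictly monotone, continuous) 1- and 2-wave curves of the shallow water Riemann problem. -/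
noncomputable def phiL (g hl vl h : ℝ) : ℝ :=
  if h ≤ hl then vl - 2 * (Real.sqrt (g * h) - Real.sqrt (g * hl))
  else vl - (h - hl) * Real.sqrt (g * (h + hl) / (2 * h * hl))

lemma psi_lt (g hl a b : ℝ) (hg : 0 < g) (hhl : 0 < hl) (ha : hl ≤ a) (hab : a < b) :
    (a - hl) * Real.sqrt (g * (a + hl) / (2 * a * hl))
      < (b - hl) * Real.sqrt (g * (b + hl) / (2 * b * hl)) := by
  have ha0 : 0 < a := lt_of_lt_of_le hhl ha
  have hb0 : 0 < b := ha0.trans hab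
  have hX : (0:ℝ) ≤ g * (a + hl) / (2 * a * hl) := by positivity
  have hY : (0:ℝ) ≤ g * (b + hl) / (2 * b * hl) := by positivity
  have h1 : 0 ≤ (a - hl) * Real.sqrt (g * (a + hl) / (2 * a * hl)) :=
    mul_nonneg (by linarith) (Real.sqrt_nonneg _)
  have hsq : ((a - hl) * Real.sqrt (g * (a + hl) / (2 * a * hl))) ^ 2
      < ((b - hl) * Real.sqrt (g * (b + hl) / (2 * b * hl))) ^ 2 := by
    rw [mul_pow, mul_pow, Real.sq_sqrt hX, Real.sq_sqrt hY]
    rw [mul_div_assoc', mul_div_assoc', div_lt_div_iff₀ (by positivity) (by positivity)]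
    have key : 0 < a * b * (a + b) - (hl * (a * b) + hl ^ 3) := by
      nlinarith [mul_nonneg (mul_pos ha0 hb0).le (sub_nonneg.2 ha),
        mul_pos (mul_pos hhl hhl) (sub_pos.2 (lt_of_le_of_lt ha hab)),
        mul_nonneg hb0.le (mul_nonneg ha0.le (sub_nonneg.2 ha)),
        mul_nonneg hb0.le (mul_nonneg hhl.le (sub_nonneg.2 ha))]
    have h2 : 0 < (2 * g * hl) * ((b - a) * (a * b * (a + b) - (hl * (a * b) + hl ^ 3))) :=
      mul_pos (by positivity) (mul_pos (sub_pos.2 hab) key)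
    nlinarith [h2]
  exact lt_of_pow_lt_pow_left₀ 2 (mul_nonneg (by linarith) (Real.sqrt_nonneg _)) hsq

lemma phiL_strictAntiOn (g hl vl : ℝ) (hg : 0 < g) (hhl : 0 < hl) :
    StrictAntiOn (phiL g hl vl) (Set.Ioi 0) := by
  intro a ha b hb hab
  simp only [Set.mem_Ioi] at ha hb
  unfold phiL
  by_cases h1 : a ≤ hl
  · by_cases h2 : b ≤ hl
    · rw [if_pos h1, if_pos h2]
      have : Real.sqrt (g * a) < Real.sqrt (g * b) :=
        Real.sqrt_lt_sqrt (by positivity) (by nlinarith)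
      linarith
    · rw [if_pos h1, if_neg h2]
      push_neg at h2
      have hb1 : 0 < (b - hl) * Real.sqrt (g * (b + hl) / (2 * b * hl)) := by
        apply mul_pos (by linarith)
        apply Real.sqrt_pos.2
        positivity
      have : Real.sqrt (g * a) ≤ Real.sqrt (g * hl) :=
        Real.sqrt_le_sqrt (by nlinarith)
      linarith
  · push_neg at h1
    have h2 : ¬ b ≤ hl := by push_neg; linarith
    rw [if_neg h2, if_neg (by push_neg; exact h1)]
    have := psi_lt g hl a b hg hhl h1.le hab
    linarith

lemma phiL_continuousOn (g hl vl : ℝ) (hhl : 0 < hl) :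
    ContinuousOn (phiL g hl vl) (Set.Ioi 0) := by
  unfold phiL
  apply ContinuousOn.if
  · intro a ha
    have : a ∈ frontier {a : ℝ | a ≤ hl} := ha.2
    rw [show {a : ℝ | a ≤ hl} = Set.Iic hl from rfl, frontier_Iic] at this
    simp only [Set.mem_singleton_iff] at this
    subst this
    simp
  · exact (by continuity : Continuous fun h : ℝ =>
      vl - 2 * (Real.sqrt (g * h) - Real.sqrt (g * hl))).continuousOn
  · apply ContinuousOn.sub continuousOn_const
    apply ContinuousOn.mul (by fun_prop)
    apply Real.continuous_sqrt.comp_continuousOn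
    apply ContinuousOn.div (by fun_prop) (by fun_prop)
    intro x hx
    have hx0 : 0 < x := hx.1
    positivity

lemma phiL_eval_le (g hl vl h : ℝ) (hle : h ≤ hl) :
    phiL g hl vl h = vl - 2 * (Real.sqrt (g * h) - Real.sqrt (g * hl)) := if_pos hle

lemma phiL_eval_gt (g hl vl h : ℝ) (hgt : hl < h) :
    phiL g hl vl h = vl - (h - hl) * Real.sqrt (g * (h + hl) / (2 * h * hl)) :=
  if_neg (not_le.2 hgt)

/-- If `v_l + 2√(g h_l) > v_r − 2√(g h_r)` then the wave curves `φ_l` and `φ_r`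
intersect at a unique height `ĥ > 0`. -/
theorem riemann_intermediate_state_exists_unique (g hl hr vl vr : ℝ)
    (hg : 0 < g) (hhl : 0 < hl) (hhr : 0 < hr)
    (hcomp : vl + 2 * Real.sqrt (g * hl) > vr - 2 * Real.sqrt (g * hr)) :
    ∃! h : ℝ, 0 < h ∧
      (if h ≤ hl then vl - 2 * (Real.sqrt (g * h) - Real.sqrt (g * hl))
        else vl - (h - hl) * Real.sqrt (g * (h + hl) / (2 * h * hl)))
      =
      (if h ≤ hr then vr + 2 * (Real.sqrt (g * h) - Real.sqrt (g * hr))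
        else vr + (h - hr) * Real.sqrt (g * (h + hr) / (2 * h * hr))) := by
  set F : ℝ → ℝ := fun h => phiL g hl vl h + phiL g hr (-vr) h with hF
  -- bridge between the statement's if-expressions and F
  have bridge : ∀ h : ℝ,
      ((if h ≤ hl then vl - 2 * (Real.sqrt (g * h) - Real.sqrt (g * hl))
        else vl - (h - hl) * Real.sqrt (g * (h + hl) / (2 * h * hl)))
      =
      (if h ≤ hr then vr + 2 * (Real.sqrt (g * h) - Real.sqrt (g * hr))
        else vr + (h - hr) * Real.sqrt (g * (h + hr) / (2 * h * hr)))) ↔ F h = 0 := by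
    intro h
    simp only [hF, phiL]
    split_ifs <;> constructor <;> intro hh <;> linarith
  have hanti : StrictAntiOn F (Set.Ioi 0) := fun a ha b hb hab =>
    add_lt_add (phiL_strictAntiOn g hl vl hg hhl ha hb hab)
      (phiL_strictAntiOn g hr (-vr) hg hhr ha hb hab)
  have hcont : ContinuousOn F (Set.Ioi 0) :=
    (phiL_continuousOn g hl vl hhl).add (phiL_continuousOn g hr (-vr) hhr)
  -- the gap
  set c : ℝ := vl + 2 * Real.sqrt (g * hl) - (vr - 2 * Real.sqrt (g * hr)) with hc
  have hc0 : 0 < c := by simp only [hc]; linarith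
  -- small endpoint
  set h0 : ℝ := min (min hl hr) (c ^ 2 / (32 * g)) with hh0
  have h00 : 0 < h0 := lt_min (lt_min hhl hhr) (by positivity)
  have h0l : h0 ≤ hl := le_trans (min_le_left _ _) (min_le_left _ _)
  have h0r : h0 ≤ hr := le_trans (min_le_left _ _) (min_le_right _ _)
  have hFh0 : 0 < F h0 := by
    have hs : Real.sqrt (g * h0) < c / 4 := by
      rw [show c / 4 = Real.sqrt ((c/4)^2) by rw [Real.sqrt_sq (by positivity)]]
      apply Real.sqrt_lt_sqrt (by positivity)
      have : h0 ≤ c ^ 2 / (32 * g) := min_le_right _ _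
      have : g * h0 ≤ c ^ 2 / 32 := by
        rw [div_mul_eq_div_div] at this
        calc g * h0 ≤ g * (c ^ 2 / 32 / g) := by nlinarith
          _ = c ^ 2 / 32 := by field_simp
      nlinarith
    simp only [hF, phiL_eval_le g hl vl h0 h0l, phiL_eval_le g hr (-vr) h0 h0r]
    simp only [hc] at hc0 hs ⊢
    linarith
  -- large endpoint
  set s : ℝ := Real.sqrt (g / (2 * hl)) with hs
  have hs0 : 0 < s := Real.sqrt_pos.2 (by positivity)
  set h1 : ℝ := max hl hr + (max (vl - vr) 0 + 1) / s with hh1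
  have hq : 0 < (max (vl - vr) 0 + 1) / s := by positivity
  have h1l : hl < h1 := by
    have := le_max_left hl hr; simp only [hh1]; linarith
  have h1r : hr < h1 := by
    have := le_max_right hl hr; simp only [hh1]; linarith
  have hFh1 : F h1 < 0 := by
    have hsle : s ≤ Real.sqrt (g * (h1 + hl) / (2 * h1 * hl)) := by
      apply Real.sqrt_le_sqrt
      rw [div_le_div_iff₀ (by positivity) (by positivity)]
      have h10 : 0 < h1 := hhl.trans h1l
      nlinarith [mul_pos hg (mul_pos hhl hhl)]
    have hterm : max (vl - vr) 0 + 1 ≤ (h1 - hl) * Real.sqrt (g * (h1 + hl) / (2 * h1 * hl)) := by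
      have e1 : (max (vl - vr) 0 + 1) = ((max (vl - vr) 0 + 1) / s) * s := by
        field_simp
      rw [e1]
      apply mul_le_mul ?_ hsle hs0.le (by linarith)
      have := le_max_left hl hr
      simp only [hh1]; linarith
    have hterm2 : 0 ≤ (h1 - hr) * Real.sqrt (g * (h1 + hr) / (2 * h1 * hr)) :=
      mul_nonneg (by linarith) (Real.sqrt_nonneg _)
    have hvm : vl - vr ≤ max (vl - vr) 0 := le_max_left _ _
    simp only [hF, phiL_eval_gt g hl vl h1 h1l, phiL_eval_gt g hr (-vr) h1 h1r]
    linarith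
  -- IVT
  have h01 : h0 ≤ h1 := le_trans h0l (le_of_lt h1l)
  have hsub : Set.Icc h0 h1 ⊆ Set.Ioi 0 := fun x hx => lt_of_lt_of_le h00 hx.1
  have hivt := intermediate_value_Icc' h01 (hcont.mono hsub)
  have h0mem : (0:ℝ) ∈ Set.Icc (F h1) (F h0) := ⟨hFh1.le, hFh0.le⟩
  obtain ⟨x, hxmem, hxeq⟩ := hivt h0mem
  have hx0 : 0 < x := lt_of_lt_of_le h00 hxmem.1
  refine ⟨x, ⟨hx0, (bridge x).2 hxeq⟩, ?_⟩
  rintro y ⟨hy0, hyeq⟩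
  have hyF : F y = 0 := (bridge y).1 hyeq
  exact hanti.injOn (Set.mem_Ioi.2 hy0) (Set.mem_Ioi.2 hx0) (by rw [hyF, hxeq])
end

section
/- Let α1 = −2s1, γ2 = α2 cos φ + β2 sin φ, γ3 = α3 cos θ + β3 sin θ with α2, α3, β1, β2, β3 defined from the junction geometry. At a state with v1 = v2 = v3 = 0 and h1, h2, h3 > 0, the Jacobian determinant of the junction map Ψ (with all-rarefaction coupling) equals g^{5/2} sqrt(h1 h2 h3) (−α1(α2β3 − α3β2) sqrt(h2 h3) − γ2(α1β3 − α3β1) sqrt(h1 h3) + γ3(α1β2 − α2β1) sqrt(h1 h2)). -/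
set_option maxRecDepth 10000
set_option maxHeartbeats 2000000


/-- The Jacobian determinant of the junction map `Ψ` (with all-rarefaction coupling)
at a state with zero velocities factors as
`g^{5/2} √(h1 h2 h3) (−α1(α2β3−α3β2)√(h2h3) − γ2(α1β3−α3β1)√(h1h3) + γ3(α1β2−α2β1)√(h1h2))`. -/
theorem junction_jacobian_det_zero_velocity
    (g s1 θ φ α1 α2 α3 β1 β2 β3 γ2 γ3 h1 h2 h3 : ℝ)
    (hg : 0 < g) (hs1 : 0 < s1)
    (hh1 : 0 < h1) (hh2 : 0 < h2) (hh3 : 0 < h3)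
    (hα1 : α1 = -(2 * s1))
    (hγ2 : γ2 = α2 * Real.cos φ + β2 * Real.sin φ)
    (hγ3 : γ3 = α3 * Real.cos θ + β3 * Real.sin θ) :
    Matrix.det
      (!![0, 0, 0, α1 * h1, γ2 * h2, γ3 * h3;
          α1 * g * h1, α2 * g * h2, α3 * g * h3, 0, 0, 0;
          β1 * g * h1, β2 * g * h2, β3 * g * h3, 0, 0, 0;
          Real.sqrt g / Real.sqrt h1, 0, 0, 1, 0, 0;
          0, -(Real.sqrt g / Real.sqrt h2), 0, 0, 1, 0;
          0, 0, -(Real.sqrt g / Real.sqrt h3), 0, 0, 1] : Matrix (Fin 6) (Fin 6) ℝ)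
    = g^2 * Real.sqrt g * Real.sqrt (h1 * h2 * h3) *
        (-(α1 * (α2 * β3 - α3 * β2)) * Real.sqrt (h2 * h3)
          - γ2 * (α1 * β3 - α3 * β1) * Real.sqrt (h1 * h3)
          + γ3 * (α1 * β2 - α2 * β1) * Real.sqrt (h1 * h2)) := by
  have q1 : Real.sqrt h1 > 0 := Real.sqrt_pos.mpr hh1
  have q2 : Real.sqrt h2 > 0 := Real.sqrt_pos.mpr hh2
  have q3 : Real.sqrt h3 > 0 := Real.sqrt_pos.mpr hh3
  have e1 : Real.sqrt h1 * Real.sqrt h1 = h1 := Real.mul_self_sqrt hh1.le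
  have e2 : Real.sqrt h2 * Real.sqrt h2 = h2 := Real.mul_self_sqrt hh2.le
  have e3 : Real.sqrt h3 * Real.sqrt h3 = h3 := Real.mul_self_sqrt hh3.le
  have hblock :
      (!![0, 0, 0, α1 * h1, γ2 * h2, γ3 * h3;
          α1 * g * h1, α2 * g * h2, α3 * g * h3, 0, 0, 0;
          β1 * g * h1, β2 * g * h2, β3 * g * h3, 0, 0, 0;
          Real.sqrt g / Real.sqrt h1, 0, 0, 1, 0, 0;
          0, -(Real.sqrt g / Real.sqrt h2), 0, 0, 1, 0;
          0, 0, -(Real.sqrt g / Real.sqrt h3), 0, 0, 1] : Matrix (Fin 6) (Fin 6) ℝ)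
      = (Matrix.fromBlocks
          (!![0, 0, 0; α1 * g * h1, α2 * g * h2, α3 * g * h3;
              β1 * g * h1, β2 * g * h2, β3 * g * h3] : Matrix (Fin 3) (Fin 3) ℝ)
          (!![α1 * h1, γ2 * h2, γ3 * h3; 0, 0, 0; 0, 0, 0] : Matrix (Fin 3) (Fin 3) ℝ)
          (!![Real.sqrt g / Real.sqrt h1, 0, 0; 0, -(Real.sqrt g / Real.sqrt h2), 0;
              0, 0, -(Real.sqrt g / Real.sqrt h3)] : Matrix (Fin 3) (Fin 3) ℝ)
          1).submatrix finSumFinEquiv.symm finSumFinEquiv.symm := by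
    ext i j
    fin_cases i <;> fin_cases j <;> rfl
  rw [hblock, Matrix.det_submatrix_equiv_self, Matrix.det_fromBlocks_one₂₂]
  rw [show h1 * h2 * h3 = h1 * (h2 * h3) by ring,
    Real.sqrt_mul hh1.le, Real.sqrt_mul hh2.le, Real.sqrt_mul hh1.le h3, Real.sqrt_mul hh1.le h2]
  simp [Matrix.det_fin_three, Matrix.mul_apply, Fin.sum_univ_succ]
  generalize Real.sqrt h1 = t1 at q1 e1 ⊢
  generalize Real.sqrt h2 = t2 at q2 e2 ⊢
  generalize Real.sqrt h3 = t3 at q3 e3 ⊢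
  rw [← e1, ← e2, ← e3]
  field_simp
  ring
end

section
/- Suppose θ ∈ (0, π/2), φ ∈ (−π/2, 0), s1, s2, s3 > 0 and the junction triangle is non-degenerate, i.e., (s1 sin(θ−φ) + s3 sin φ − s2 sin θ)² + 4 s2 s3 sin φ sin θ ≠ 0. Then for all h1, h2, h3 > 0, the quantity 2 g^{5/2} sqrt(h1 h2 h3) (sqrt(h1 h2) s3 + sqrt(h1 h3) s2 + sqrt(h2 h3) s1) · (4 s2 s3/sin(θ−φ) + (s1 sin(θ−φ) + s3 sin φ − s2 sin θ)²/(sin(θ−φ) sin φ sin θ)) is nonzero. -/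
/-!
The prefactor is a product of positive quantities, and the last factor is the non-degeneracy
expression divided by `sin (θ - φ) * sin φ * sin θ`, whose factors are nonzero for the given angles.
-/

open Real

theorem div_add_div_mul_mul_ne_zero {K : Type*} [Field K] {a p q c d : K}
    (ha : a ≠ 0) (hp : p ≠ 0) (hq : q ≠ 0) (h : d + c * p * q ≠ 0) :
    c / a + d / (a * p * q) ≠ 0 := by
  have hsum : c / a + d / (a * p * q) = (d + c * p * q) / (a * p * q) := by
    field_simp
    ring
  rw [hsum]
  exact div_ne_zero h (by simp [ha, hp, hq])

/-- For a non-degenerate junction triangle, the Jacobian determinant of the junction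
Riemann-solver map at a zero-velocity state is nonzero. -/
theorem junction_jacobian_nonzero (g θ φ s1 s2 s3 h1 h2 h3 : ℝ)
    (hg : 0 < g)
    (hθ1 : 0 < θ) (hθ2 : θ < Real.pi / 2)
    (hφ1 : -(Real.pi / 2) < φ) (hφ2 : φ < 0)
    (hs1 : 0 < s1) (hs2 : 0 < s2) (hs3 : 0 < s3)
    (hh1 : 0 < h1) (hh2 : 0 < h2) (hh3 : 0 < h3)
    (hnondeg : (s1 * Real.sin (θ - φ) + s3 * Real.sin φ - s2 * Real.sin θ)^2
        + 4 * s2 * s3 * Real.sin φ * Real.sin θ ≠ 0) :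
    2 * g^2 * Real.sqrt g * Real.sqrt (h1 * h2 * h3) *
      (Real.sqrt (h1 * h2) * s3 + Real.sqrt (h1 * h3) * s2 + Real.sqrt (h2 * h3) * s1) *
      (4 * s2 * s3 / Real.sin (θ - φ)
        + (s1 * Real.sin (θ - φ) + s3 * Real.sin φ - s2 * Real.sin θ)^2
            / (Real.sin (θ - φ) * Real.sin φ * Real.sin θ)) ≠ 0 := by
  have hsin_θ : 0 < sin θ := sin_pos_of_pos_of_lt_pi hθ1 (by linarith [pi_pos])
  have hsin_φ : sin φ < 0 := sin_neg_of_neg_of_neg_pi_lt hφ2 (by linarith [pi_pos])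
  have hsin_θφ : 0 < sin (θ - φ) := sin_pos_of_pos_of_lt_pi (by linarith) (by linarith)
  have hprefactor : 0 < 2 * g ^ 2 * √g * √(h1 * h2 * h3) *
      (√(h1 * h2) * s3 + √(h1 * h3) * s2 + √(h2 * h3) * s1) := by
    positivity
  exact mul_ne_zero hprefactor.ne'
    (div_add_div_mul_mul_ne_zero hsin_θφ.ne' hsin_φ.ne hsin_θ.ne' hnondeg)
end
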